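/- In the MDP constructed from DAG G and GFlowNet reward R, if the intermediate rewards are scaled as λ·log P_B(s|s') while terminal rewards remain log R(x), then the optimal policy of the λ-entropy-regularized problem samples terminal states with probability proportional to R(x)^{1/λ}, i.e., from the tempered reward distribution. -/

import Mathlib

/- Common setup: finite DAGs, policies, trajectories, GFlowNet notions. -/

noncomputable section
open scoped Classical
open Finset Real

/-- A finite DAG with a distinguished initial state `s0`. Acyclicity is witnessed
by a rank function that strictly increases along edges. -/
structure FinDAG (S : Type) [Fintype S] where
  edge : S → S → Prop
  rank : S → ℕ
  rank_lt : ∀ ⦃s s'⦄, edge s s' → rank s < rank s'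
  s0 : S

variable {S : Type} [Fintype S]

namespace FinDAG

/-- A state is terminal iff it has no outgoing edges. -/
def Terminal (G : FinDAG S) (s : S) : Prop := ∀ s', ¬ G.edge s s'

/-- The children of a state. -/
def children (G : FinDAG S) (s : S) : Finset S := Finset.univ.filter fun s' => G.edge s s'

/-- The parents of a state. -/
def parents (G : FinDAG S) (s' : S) : Finset S := Finset.univ.filter fun s => G.edge s s'

/-- The set of terminal states `X`. -/
def X (G : FinDAG S) : Finset S := Finset.univ.filter fun x => G.Terminal x

/-- `PB` is a (full-support) backward policy: positive exactly on edges, and for each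
state with parents, the probabilities of its parents sum to one. -/
structure IsBackward (G : FinDAG S) (PB : S → S → ℝ) : Prop where
  pos : ∀ s s', G.edge s s' → 0 < PB s s'
  supp : ∀ s s', ¬ G.edge s s' → PB s s' = 0
  sum_one : ∀ s', (G.parents s').Nonempty → ∑ s ∈ G.parents s', PB s s' = 1

/-- `PF` is a (full-support) forward policy: positive exactly on edges, and for each
non-terminal state the probabilities of its children sum to one. -/
structure IsForward (G : FinDAG S) (PF : S → S → ℝ) : Prop where
  pos : ∀ s s', G.edge s s' → 0 < PF s s'
  supp : ∀ s s', ¬ G.edge s s' → PF s s' = 0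
  sum_one : ∀ s, ¬ G.Terminal s → ∑ s' ∈ G.children s, PF s s' = 1

/-- A complete trajectory: starts at `s0`, follows edges and ends in a terminal state. -/
def IsTraj (G : FinDAG S) (τ : List S) : Prop :=
  τ.head? = some G.s0 ∧ τ.Chain' G.edge ∧ G.Terminal (τ.getLastD G.s0)

/-- The terminal state `x_τ` reached by a trajectory. -/
def lastState (G : FinDAG S) (τ : List S) : S := τ.getLastD G.s0

/-- A Markovian flow `F` induced by the backward policy `PB` and reward `R`:
`F(x) = R(x)` on terminal states, and `F(s) = ∑_{s'} P_B(s|s') F(s')`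
(the edge flow being `F(s→s') = P_B(s|s') F(s')`). -/
def IsFlow (G : FinDAG S) (PB : S → S → ℝ) (R : S → ℝ) (F : S → ℝ) : Prop :=
  (∀ x, G.Terminal x → F x = R x) ∧
  (∀ s, ¬ G.Terminal s → F s = ∑ s' ∈ G.children s, PB s s' * F s')

/-- `V` solves the soft Bellman optimality equations (λ = 1) of the MDP `M_G`
with rewards `r(s,s') = log P_B(s|s')` on interior edges and `log R(x)` at the
terminal transition `x → s_f` (so `V(x) = log R(x)`). -/
def IsSoftValue (G : FinDAG S) (PB : S → S → ℝ) (R : S → ℝ) (V : S → ℝ) : Prop :=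
  (∀ x, G.Terminal x → V x = Real.log (R x)) ∧
  (∀ s, ¬ G.Terminal s →
    V s = Real.log (∑ s' ∈ G.children s, Real.exp (Real.log (PB s s') + V s')))

/-- The softmax-optimal policy `π*(s'|s) = exp(r(s,s') + V(s') − V(s))`. -/
def softOpt (G : FinDAG S) (PB : S → S → ℝ) (V : S → ℝ) (s s' : S) : ℝ :=
  if G.edge s s' then Real.exp (Real.log (PB s s') + V s' - V s) else 0

end FinDAG

/-- Product of `f` over consecutive pairs of the list `τ`. -/
def pathProd (f : S → S → ℝ) (τ : List S) : ℝ :=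
  ((τ.zip τ.tail).map fun p => f p.1 p.2).prod

/-- Sum of `f` over consecutive pairs of the list `τ`. -/
def pathSum (f : S → S → ℝ) (τ : List S) : ℝ :=
  ((τ.zip τ.tail).map fun p => f p.1 p.2).sum

/-- `V` solves the soft Bellman optimality equations with entropy coefficient `lam` for
the MDP on `G` with intermediate rewards `λ·log P_B(s|s')` and terminal rewards
`log R(x)`:  `V(x) = log R(x)` and
`V(s) = λ log ∑_{s'} exp((λ log P_B(s|s') + V(s'))/λ)`. -/
def IsSoftValueLam {S : Type} [Fintype S] (G : FinDAG S) (PB : S → S → ℝ) (R : S → ℝ)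
    (lam : ℝ) (V : S → ℝ) : Prop :=
  (∀ x, G.Terminal x → V x = Real.log (R x)) ∧
  (∀ s, ¬ G.Terminal s →
    V s = lam * Real.log (∑ s' ∈ G.children s,
      Real.exp ((lam * Real.log (PB s s') + V s') / lam)))

/-- The λ-softmax optimal policy `π*(s'|s) = exp((λ log P_B(s|s') + V(s') − V(s))/λ)`. -/
def softOptLam {S : Type} [Fintype S] (G : FinDAG S) (PB : S → S → ℝ) (lam : ℝ)
    (V : S → ℝ) (s s' : S) : ℝ :=
  if G.edge s s' then Real.exp ((lam * Real.log (PB s s') + V s' - V s) / lam) else 0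


section Aux

variable {S : Type} [Fintype S]

lemma pathProd_singleton (f : S → S → ℝ) (a : S) : pathProd f [a] = 1 := by
  simp [pathProd]

lemma pathProd_cons_cons (f : S → S → ℝ) (a b : S) (t : List S) :
    pathProd f (a :: b :: t) = f a b * pathProd f (b :: t) := by
  simp [pathProd]

lemma pathProd_concat (f : S → S → ℝ) :
    ∀ (q : List S) (hq : q ≠ []) (s : S),
      pathProd f (q ++ [s]) = pathProd f q * f (q.getLast hq) s
  | [], hq, s => absurd rfl hq
  | [a], _, s => by simp [pathProd_cons_cons, pathProd_singleton, pathProd]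
  | a :: b :: r, _, s => by
      rw [List.cons_append, List.cons_append, pathProd_cons_cons,
        ← List.cons_append, pathProd_concat f (b :: r) (List.cons_ne_nil _ _) s,
        pathProd_cons_cons, List.getLast_cons (List.cons_ne_nil _ _)]
      ring

lemma FinDAG.chain'_nodup (G : FinDAG S) {τ : List S} (h : τ.Chain' G.edge) : τ.Nodup := by
  letI : IsTrans S (fun a b => G.rank a < G.rank b) := ⟨fun a b c hab hbc => lt_trans hab hbc⟩
  have h2 : τ.Chain' (fun a b => G.rank a < G.rank b) := h.imp (fun a b hab => G.rank_lt hab)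
  have h3 : τ.Pairwise (fun a b => G.rank a < G.rank b) := List.isChain_iff_pairwise.mp h2
  exact h3.imp (fun hab => by rintro rfl; exact lt_irrefl _ hab)

/-- Finset of paths in `G` from `s` to `x`. -/
def PathsTo (G : FinDAG S) (s x : S) : Finset (List S) :=
  ((List.finite_length_le S (Fintype.card S)).toFinset).filter
    (fun τ => τ.head? = some s ∧ τ.Chain' G.edge ∧ τ.getLast? = some x)

lemma mem_PathsTo {G : FinDAG S} {s x : S} {τ : List S} :
    τ ∈ PathsTo G s x ↔ τ.head? = some s ∧ τ.Chain' G.edge ∧ τ.getLast? = some x := by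
  constructor
  · intro h; exact (Finset.mem_filter.mp h).2
  · intro h
    refine Finset.mem_filter.mpr ⟨?_, h⟩
    simp only [Set.Finite.mem_toFinset, Set.mem_setOf_eq]
    exact (G.chain'_nodup h.2.1).length_le_card

lemma rank_le_of_chain (G : FinDAG S) :
    ∀ (τ : List S), τ.Chain' G.edge → ∀ a b, τ.head? = some a → τ.getLast? = some b →
      G.rank a ≤ G.rank b
  | [], _, a, b, ha, _ => by simp at ha
  | [c], _, a, b, ha, hb => by
      simp only [List.head?_cons, Option.some.injEq] at ha
      simp only [List.getLast?_singleton, Option.some.injEq] at hb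
      subst ha; subst hb; exact le_refl _
  | c :: d :: r, hchain, a, b, ha, hb => by
      simp only [List.head?_cons, Option.some.injEq] at ha
      subst ha
      rw [List.getLast?_cons_cons] at hb
      rcases List.isChain_cons_cons.mp hchain with ⟨he, hc⟩
      exact le_trans (le_of_lt (G.rank_lt he))
        (rank_le_of_chain G (d :: r) hc d b rfl hb)

lemma pathProd_softOptLam (G : FinDAG S) (PB : S → S → ℝ) (hPB : G.IsBackward PB)
    (lam : ℝ) (hlam : 0 < lam) (V : S → ℝ) :
    ∀ (τ : List S), τ.Chain' G.edge → ∀ a b, τ.head? = some a → τ.getLast? = some b →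
      pathProd (softOptLam G PB lam V) τ
        = pathProd PB τ * Real.exp ((V b - V a) / lam)
  | [], _, a, b, ha, _ => by simp at ha
  | [c], _, a, b, ha, hb => by
      simp only [List.head?_cons, Option.some.injEq] at ha
      simp only [List.getLast?_singleton, Option.some.injEq] at hb
      subst ha; subst hb
      simp [pathProd_singleton]
  | c :: d :: r, hchain, a, b, ha, hb => by
      simp only [List.head?_cons, Option.some.injEq] at ha
      subst ha
      rw [List.getLast?_cons_cons] at hb
      rcases List.isChain_cons_cons.mp hchain with ⟨he, hc⟩
      have hfac : softOptLam G PB lam V c d = PB c d * Real.exp ((V d - V c) / lam) := by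
        have h1 : (lam * Real.log (PB c d) + V d - V c) / lam
            = Real.log (PB c d) + (V d - V c) / lam := by
          field_simp
          ring
        rw [softOptLam, if_pos he, h1, Real.exp_add, Real.exp_log (hPB.pos _ _ he)]
      have hadd : Real.exp ((V d - V c) / lam) * Real.exp ((V b - V d) / lam)
          = Real.exp ((V b - V c) / lam) := by
        rw [← Real.exp_add]; congr 1; ring
      rw [pathProd_cons_cons, pathProd_cons_cons, hfac,
        pathProd_softOptLam G PB hPB lam hlam V (d :: r) hc d b rfl hb, ← hadd]
      ring

lemma sum_pathsTo_eq_one (G : FinDAG S) (PB : S → S → ℝ) (hPB : G.IsBackward PB)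
    (hparents : ∀ s, s ≠ G.s0 → (G.parents s).Nonempty) :
    ∀ s, ∑ τ ∈ PathsTo G G.s0 s, pathProd PB τ = 1 := by
  suffices H : ∀ n (s : S), G.rank s = n → ∑ τ ∈ PathsTo G G.s0 s, pathProd PB τ = 1 by
    intro s; exact H (G.rank s) s rfl
  intro n
  induction n using Nat.strong_induction_on with
  | _ n ih =>
  intro s hn
  by_cases hs : s = G.s0
  · subst hs
    have hone : PathsTo G G.s0 G.s0 = {[G.s0]} := by
      apply Finset.eq_singleton_iff_unique_mem.mpr
      refine ⟨mem_PathsTo.mpr ⟨rfl, List.isChain_singleton _, rfl⟩, ?_⟩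
      intro τ hτ
      obtain ⟨h1, h2, h3⟩ := mem_PathsTo.mp hτ
      cases τ with
      | nil => simp at h1
      | cons c t =>
        cases t with
        | nil =>
          simp only [List.head?_cons, Option.some.injEq] at h1
          subst h1; rfl
        | cons d r =>
          exfalso
          simp only [List.head?_cons, Option.some.injEq] at h1
          subst h1
          rw [List.getLast?_cons_cons] at h3
          rcases List.isChain_cons_cons.mp h2 with ⟨he, hc⟩
          have := rank_le_of_chain G (d :: r) hc d G.s0 rfl h3
          exact absurd (lt_of_lt_of_le (G.rank_lt he) this) (lt_irrefl _)
    rw [hone, Finset.sum_singleton, pathProd_singleton]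
  · have hdecomp : PathsTo G G.s0 s
        = (G.parents s).biUnion (fun t => (PathsTo G G.s0 t).image (fun q => q ++ [s])) := by
      ext τ
      simp only [Finset.mem_biUnion, Finset.mem_image]
      constructor
      · intro hτ
        obtain ⟨h1, h2, h3⟩ := mem_PathsTo.mp hτ
        have hne : τ ≠ [] := by rintro rfl; simp at h1
        have hτeq : τ.dropLast ++ [s] = τ := List.dropLast_append_getLast? s h3
        have hdne : τ.dropLast ≠ [] := by
          intro h
          rw [h, List.nil_append] at hτeq
          rw [← hτeq] at h1
          simp only [List.head?_cons, Option.some.injEq] at h1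
          exact hs h1
        have hchain2 := h2
        rw [← hτeq] at hchain2
        rcases List.isChain_append.mp hchain2 with ⟨hc1, _, hrel⟩
        have hedge : G.edge (τ.dropLast.getLast hdne) s :=
          hrel _ (List.getLast?_eq_getLast_of_ne_nil hdne) s rfl
        refine ⟨τ.dropLast.getLast hdne,
          Finset.mem_filter.mpr ⟨Finset.mem_univ _, hedge⟩, τ.dropLast, ?_, hτeq⟩
        apply mem_PathsTo.mpr
        refine ⟨?_, hc1, List.getLast?_eq_getLast_of_ne_nil hdne⟩
        rw [← hτeq, List.head?_append_of_ne_nil _ hdne] at h1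
        exact h1
      · rintro ⟨t, ht, q, hq, rfl⟩
        obtain ⟨h1, h2, h3⟩ := mem_PathsTo.mp hq
        have hqne : q ≠ [] := by rintro rfl; simp at h1
        have hedge : G.edge t s := (Finset.mem_filter.mp ht).2
        apply mem_PathsTo.mpr
        refine ⟨?_, ?_, List.getLast?_concat⟩
        · rw [List.head?_append_of_ne_nil _ hqne]; exact h1
        · apply List.isChain_append.mpr
          refine ⟨h2, List.isChain_singleton _, ?_⟩
          intro x hx y hy
          rw [h3] at hx
          simp only [Option.mem_def, Option.some.injEq] at hx
          simp only [List.head?_cons, Option.mem_def, Option.some.injEq] at hy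
          subst hx; subst hy; exact hedge
    have hdisj : (↑(G.parents s) : Set S).PairwiseDisjoint
        (fun t => (PathsTo G G.s0 t).image (fun q => q ++ [s])) := by
      intro t1 _ t2 _ hne
      apply Finset.disjoint_left.mpr
      intro τ hτ1 hτ2
      obtain ⟨q1, hq1, he1⟩ := Finset.mem_image.mp hτ1
      obtain ⟨q2, hq2, he2⟩ := Finset.mem_image.mp hτ2
      have hq : q1 = q2 := by
        have := he1.trans he2.symm
        exact List.append_cancel_right this
      have hl1 := (mem_PathsTo.mp hq1).2.2
      have hl2 := (mem_PathsTo.mp hq2).2.2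
      rw [hq, hl2] at hl1
      exact hne (Option.some.inj hl1).symm
    rw [hdecomp, Finset.sum_biUnion hdisj]
    have hsum : ∀ t ∈ G.parents s,
        (∑ τ ∈ (PathsTo G G.s0 t).image (fun q => q ++ [s]), pathProd PB τ) = PB t s := by
      intro t ht
      have hedge : G.edge t s := (Finset.mem_filter.mp ht).2
      rw [Finset.sum_image (fun q1 _ q2 _ h => List.append_cancel_right h)]
      have hterm : ∀ q ∈ PathsTo G G.s0 t, pathProd PB (q ++ [s]) = pathProd PB q * PB t s := by
        intro q hq
        obtain ⟨h1, h2, h3⟩ := mem_PathsTo.mp hq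
        have hqne : q ≠ [] := by rintro rfl; simp at h1
        rw [pathProd_concat PB q hqne s]
        congr 2
        have h4 := List.getLast?_eq_getLast_of_ne_nil hqne
        rw [h4] at h3
        exact Option.some.inj h3
      rw [Finset.sum_congr rfl hterm, ← Finset.sum_mul]
      rw [ih (G.rank t) (hn ▸ G.rank_lt hedge) t rfl, one_mul]
    rw [Finset.sum_congr rfl hsum]
    exact hPB.sum_one s (hparents s hs)

lemma pathProd_cons' (f : S → S → ℝ) (a s' : S) :
    ∀ (q : List S), q.head? = some s' → pathProd f (a :: q) = f a s' * pathProd f q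
  | [], h => by simp at h
  | b :: t, h => by
      simp only [List.head?_cons, Option.some.injEq] at h
      subst h
      rw [pathProd_cons_cons]

lemma pathsTo_cons_decomp (G : FinDAG S) {s x : S} (hterm : ¬ G.Terminal s)
    (hx : G.Terminal x) :
    PathsTo G s x
      = (G.children s).biUnion (fun s' => (PathsTo G s' x).image (fun q => s :: q)) := by
  ext τ
  simp only [Finset.mem_biUnion, Finset.mem_image]
  constructor
  · intro hτ
    obtain ⟨h1, h2, h3⟩ := mem_PathsTo.mp hτ
    cases τ with
    | nil => simp at h1
    | cons c t =>
      simp only [List.head?_cons, Option.some.injEq] at h1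
      subst h1
      cases t with
      | nil =>
        simp only [List.getLast?_singleton, Option.some.injEq] at h3
        exact absurd (h3 ▸ hx) hterm
      | cons d r =>
        rcases List.isChain_cons_cons.mp h2 with ⟨he, hc⟩
        rw [List.getLast?_cons_cons] at h3
        exact ⟨d, Finset.mem_filter.mpr ⟨Finset.mem_univ _, he⟩, d :: r,
          mem_PathsTo.mpr ⟨rfl, hc, h3⟩, rfl⟩
  · rintro ⟨s', hs', q, hq, rfl⟩
    obtain ⟨h1, h2, h3⟩ := mem_PathsTo.mp hq
    have hqne : q ≠ [] := by rintro rfl; simp at h1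
    have hedge : G.edge s s' := (Finset.mem_filter.mp hs').2
    apply mem_PathsTo.mpr
    refine ⟨rfl, ?_, ?_⟩
    · apply List.isChain_cons.mpr
      refine ⟨?_, h2⟩
      intro y hy
      rw [h1] at hy
      simp only [Option.mem_def, Option.some.injEq] at hy
      subst hy; exact hedge
    · cases q with
      | nil => exact absurd rfl hqne
      | cons d r => rw [List.getLast?_cons_cons]; exact h3

lemma exp_V_eq (G : FinDAG S) (PB : S → S → ℝ) (R : S → ℝ) (hPB : G.IsBackward PB)
    (hR : ∀ x, G.Terminal x → 0 < R x) (lam : ℝ) (hlam : 0 < lam)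
    (V : S → ℝ) (hV : IsSoftValueLam G PB R lam V) :
    ∀ s, Real.exp (V s / lam)
      = ∑ x ∈ G.X, (∑ τ ∈ PathsTo G s x, pathProd PB τ) * Real.rpow (R x) (1 / lam) := by
  suffices H : ∀ n (s : S), Finset.univ.sup G.rank - G.rank s = n →
      Real.exp (V s / lam)
        = ∑ x ∈ G.X, (∑ τ ∈ PathsTo G s x, pathProd PB τ) * Real.rpow (R x) (1 / lam) by
    intro s; exact H _ s rfl
  intro n
  induction n using Nat.strong_induction_on with
  | _ n ih =>
  intro s hn
  by_cases hterm : G.Terminal s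
  · have hsX : s ∈ G.X := Finset.mem_filter.mpr ⟨Finset.mem_univ _, hterm⟩
    rw [hV.1 s hterm]
    rw [Finset.sum_eq_single_of_mem s hsX ?_]
    · have hsingle : PathsTo G s s = {[s]} := by
        apply Finset.eq_singleton_iff_unique_mem.mpr
        refine ⟨mem_PathsTo.mpr ⟨rfl, List.isChain_singleton _, rfl⟩, ?_⟩
        intro τ hτ
        obtain ⟨h1, h2, h3⟩ := mem_PathsTo.mp hτ
        cases τ with
        | nil => simp at h1
        | cons c t =>
          simp only [List.head?_cons, Option.some.injEq] at h1
          subst h1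
          cases t with
          | nil => rfl
          | cons d r => exact absurd (List.isChain_cons_cons.mp h2).1 (hterm d)
      rw [hsingle, Finset.sum_singleton, pathProd_singleton, one_mul,
        show Real.rpow (R s) (1 / lam) = R s ^ (1 / lam) from rfl,
        Real.rpow_def_of_pos (hR s hterm)]
      congr 1
      ring
    · intro y hy hys
      have hempty : PathsTo G s y = ∅ := by
        rw [Finset.eq_empty_iff_forall_notMem]
        intro τ hτ
        obtain ⟨h1, h2, h3⟩ := mem_PathsTo.mp hτ
        cases τ with
        | nil => simp at h1
        | cons c t =>
          simp only [List.head?_cons, Option.some.injEq] at h1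
          subst h1
          cases t with
          | nil =>
            simp only [List.getLast?_singleton, Option.some.injEq] at h3
            exact hys h3.symm
          | cons d r => exact (hterm d) (List.isChain_cons_cons.mp h2).1
      rw [hempty]
      simp
  · have hchild : (G.children s).Nonempty := by
      rw [FinDAG.Terminal] at hterm
      push_neg at hterm
      obtain ⟨s', hs'⟩ := hterm
      exact ⟨s', Finset.mem_filter.mpr ⟨Finset.mem_univ _, hs'⟩⟩
    have hpos : 0 < ∑ s' ∈ G.children s,
        Real.exp ((lam * Real.log (PB s s') + V s') / lam) :=
      Finset.sum_pos (fun s' _ => Real.exp_pos _) hchild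
    have hstep : Real.exp (V s / lam)
        = ∑ s' ∈ G.children s, PB s s' * Real.exp (V s' / lam) := by
      rw [hV.2 s hterm]
      have h1 : lam * Real.log (∑ s' ∈ G.children s,
            Real.exp ((lam * Real.log (PB s s') + V s') / lam)) / lam
          = Real.log (∑ s' ∈ G.children s,
            Real.exp ((lam * Real.log (PB s s') + V s') / lam)) := by
        field_simp
      rw [h1, Real.exp_log hpos]
      apply Finset.sum_congr rfl
      intro s' hs'
      have hedge : G.edge s s' := (Finset.mem_filter.mp hs').2
      have h2 : (lam * Real.log (PB s s') + V s') / lam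
          = Real.log (PB s s') + V s' / lam := by
        field_simp
      rw [h2, Real.exp_add, Real.exp_log (hPB.pos _ _ hedge)]
    rw [hstep]
    have hIH : ∀ s' ∈ G.children s, Real.exp (V s' / lam)
        = ∑ x ∈ G.X, (∑ τ ∈ PathsTo G s' x, pathProd PB τ) * Real.rpow (R x) (1 / lam) := by
      intro s' hs'
      have hedge : G.edge s s' := (Finset.mem_filter.mp hs').2
      have hlt : Finset.univ.sup G.rank - G.rank s' < n := by
        have h1 : G.rank s < G.rank s' := G.rank_lt hedge
        have h2 : G.rank s' ≤ Finset.univ.sup G.rank := Finset.le_sup (Finset.mem_univ s')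
        omega
      exact ih _ hlt s' rfl
    rw [Finset.sum_congr rfl (fun s' hs' => by rw [hIH s' hs'])]
    simp_rw [Finset.mul_sum]
    rw [Finset.sum_comm]
    apply Finset.sum_congr rfl
    intro x hxX
    have hxterm : G.Terminal x := (Finset.mem_filter.mp hxX).2
    have hdisj : (↑(G.children s) : Set S).PairwiseDisjoint
        (fun s' => (PathsTo G s' x).image (fun q => s :: q)) := by
      intro t1 _ t2 _ hne
      apply Finset.disjoint_left.mpr
      intro τ hτ1 hτ2
      obtain ⟨q1, hq1, he1⟩ := Finset.mem_image.mp hτ1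
      obtain ⟨q2, hq2, he2⟩ := Finset.mem_image.mp hτ2
      have hq : q1 = q2 := by
        have h := he1.trans he2.symm
        injection h
      have hl1 := (mem_PathsTo.mp hq1).1
      have hl2 := (mem_PathsTo.mp hq2).1
      rw [hq, hl2] at hl1
      exact hne (Option.some.inj hl1).symm
    rw [pathsTo_cons_decomp G hterm hxterm, Finset.sum_biUnion hdisj, Finset.sum_mul]
    apply Finset.sum_congr rfl
    intro s' hs'
    have hinj : ∀ q1 ∈ PathsTo G s' x, ∀ q2 ∈ PathsTo G s' x,
        s :: q1 = s :: q2 → q1 = q2 := by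
      intro q1 _ q2 _ h
      injection h
    rw [Finset.sum_image hinj]
    have hterm_eq : ∀ q ∈ PathsTo G s' x,
        pathProd PB (s :: q) = PB s s' * pathProd PB q := by
      intro q hq
      exact pathProd_cons' PB s s' q (mem_PathsTo.mp hq).1
    rw [Finset.sum_congr rfl hterm_eq, ← Finset.mul_sum]
    ring

end Aux

/-- With intermediate rewards scaled to `λ·log P_B(s|s')` and terminal
rewards kept at `log R(x)`, the optimal λ-entropy-regularized policy samples terminal
states from the tempered distribution `x ↦ R(x)^{1/λ} / ∑_y R(y)^{1/λ}`. -/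
theorem tempered_sampling
    {S : Type} [Fintype S] (G : FinDAG S) (PB : S → S → ℝ) (R : S → ℝ)
    (hPB : G.IsBackward PB) (hR : ∀ x, G.Terminal x → 0 < R x)
    (hparents : ∀ s, s ≠ G.s0 → (G.parents s).Nonempty)
    (lam : ℝ) (hlam : 0 < lam)
    (V : S → ℝ) (hV : IsSoftValueLam G PB R lam V)
    (T : Finset (List S)) (hT : ∀ τ, τ ∈ T ↔ G.IsTraj τ) :
    ∀ x ∈ G.X,
      ∑ τ ∈ T.filter (fun τ => G.lastState τ = x), pathProd (softOptLam G PB lam V) τ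
        = Real.rpow (R x) (1 / lam) / ∑ y ∈ G.X, Real.rpow (R y) (1 / lam) := by
  intro x hx
  have hxterm : G.Terminal x := (Finset.mem_filter.mp hx).2
  have hfilter : T.filter (fun τ => G.lastState τ = x) = PathsTo G G.s0 x := by
    ext τ
    simp only [Finset.mem_filter]
    constructor
    · rintro ⟨ht, h4⟩
      obtain ⟨h1, h2, h3⟩ := (hT τ).mp ht
      have hne : τ ≠ [] := by rintro rfl; simp at h1
      refine mem_PathsTo.mpr ⟨h1, h2, ?_⟩
      have h4' : τ.getLastD G.s0 = x := h4
      rw [List.getLastD_eq_getLast?, List.getLast?_eq_getLast_of_ne_nil hne] at h4'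
      rw [List.getLast?_eq_getLast_of_ne_nil hne]
      exact congrArg some h4'
    · intro hτ
      obtain ⟨h1, h2, h3⟩ := mem_PathsTo.mp hτ
      have hne : τ ≠ [] := by rintro rfl; simp at h1
      have hlast : τ.getLastD G.s0 = x := by
        rw [List.getLastD_eq_getLast?, h3]
        rfl
      exact ⟨(hT τ).mpr ⟨h1, h2, hlast ▸ hxterm⟩, hlast⟩
  rw [hfilter]
  have htel : ∀ τ ∈ PathsTo G G.s0 x,
      pathProd (softOptLam G PB lam V) τ
        = pathProd PB τ * Real.exp ((V x - V G.s0) / lam) := by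
    intro τ hτ
    obtain ⟨h1, h2, h3⟩ := mem_PathsTo.mp hτ
    exact pathProd_softOptLam G PB hPB lam hlam V τ h2 G.s0 x h1 h3
  rw [Finset.sum_congr rfl htel, ← Finset.sum_mul,
    sum_pathsTo_eq_one G PB hPB hparents x, one_mul]
  have hs0 : Real.exp (V G.s0 / lam) = ∑ y ∈ G.X, Real.rpow (R y) (1 / lam) := by
    rw [exp_V_eq G PB R hPB hR lam hlam V hV G.s0]
    apply Finset.sum_congr rfl
    intro y hy
    rw [sum_pathsTo_eq_one G PB hPB hparents y, one_mul]
  rw [sub_div, Real.exp_sub, hs0, hV.1 x hxterm]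
  congr 1
  rw [show Real.rpow (R x) (1 / lam) = R x ^ (1 / lam) from rfl,
    Real.rpow_def_of_pos (hR x hxterm)]
  congr 1
  ring
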